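/- In the Mallows model with fixed 0 < θ < 1, for a fixed positive integer j and k = N−j, the success probability satisfies lim_{N→∞} W(N, N−j)/[N]_θ! = j·θ^{j−1}·(1−θ). -/

import Mathlib

/-- Number of left-to-right maxima of the permutation `π` (one-line notation
`i ↦ π i`): positions `j` such that `π i < π j` for all `i < j`. -/
def lrmaxCount {N : ℕ} (π : Equiv.Perm (Fin N)) : ℕ :=
  (Finset.univ.filter (fun j : Fin N => ∀ i, i < j → π i < π j)).card

/-- Number of inversions of `π`: pairs of positions `i < j` with `π i > π j`. -/
def invCount {N : ℕ} (π : Equiv.Perm (Fin N)) : ℕ :=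
  (Finset.univ.filter (fun p : Fin N × Fin N => p.1 < p.2 ∧ π p.2 < π p.1)).card

/-- Position `j` is a left-to-right maximum of `π`. -/
def IsLRMax {N : ℕ} (π : Equiv.Perm (Fin N)) (j : Fin N) : Prop :=
  ∀ i, i < j → π i < π j

/-- `π` is `k`-winnable: the positional strategy that rejects the first `k`
candidates (positions `0,…,k-1`) and accepts the next left-to-right maximum
thereafter selects the position of the maximal value. -/
def KWinnable {N : ℕ} (k : ℕ) (π : Equiv.Perm (Fin N)) : Prop :=
  ∃ j : Fin N, k ≤ (j : ℕ) ∧ IsLRMax π j ∧ (∀ i, π i ≤ π j) ∧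
    ∀ i : Fin N, k ≤ (i : ℕ) → i < j → ¬ IsLRMax π i

open Classical in
/-- Ewens-weighted count of `k`-winnable permutations:
`W(N,k) = Σ_{k-winnable π ∈ S_N} θ^{lrmax(π)}`. -/
noncomputable def W (R : Type*) [CommRing R] (N k : ℕ) (θ : R) : R :=
  ∑ π ∈ Finset.univ.filter (fun π : Equiv.Perm (Fin N) => KWinnable k π),
    θ ^ lrmaxCount π

/-- θ-analogue `[n]_θ = 1 + θ + ⋯ + θ^{n-1}`. -/
def tA (n : ℕ) (θ : ℝ) : ℝ := ∑ m ∈ Finset.range n, θ ^ m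

/-- θ-factorial `[m]_θ! = [m]_θ [m-1]_θ ⋯ [1]_θ`. -/
def qfact (m : ℕ) (θ : ℝ) : ℝ := ∏ n ∈ Finset.range m, tA (n + 1) θ

open Classical in
/-- Mallows-weighted count of `k`-winnable permutations:
`W(N,k) = Σ_{k-winnable π ∈ S_N} θ^{inv(π)}`. -/
noncomputable def WM (N k : ℕ) (θ : ℝ) : ℝ :=
  ∑ π ∈ Finset.univ.filter (fun π : Equiv.Perm (Fin N) => KWinnable k π),
    θ ^ invCount π

/-!
Encode a permutation `π ∈ S_N` by its Lehmer code `c i = #{k < i | π i < π k} ∈ {0, …, i}`.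
This is a bijection `S_N ≃ ∏ i, Fin (i + 1)`; the inversion number is `∑ i, c i`, and the
left-to-right maxima are the positions with `c i = 0`. As the global maximum is the last
left-to-right maximum, `π` is `k`-winnable iff exactly one position `p ≥ k` has `c p = 0`.
The weight `θ ^ inv` factorises over the coordinates of the code, whence
`W(N, k) = [k]_θ! · ∑_{p=k}^{N-1} ∏_{k ≤ i < N, i ≠ p} θ [i]_θ`. Dividing by
`[N]_θ! = [k]_θ! · ∏_{i=k}^{N-1} [i+1]_θ` leaves, for `k = N - j`, a sum of `j` terms, each
tending to `θ ^ (j - 1) (1 - θ)` because `[n]_θ → (1 - θ)⁻¹`.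
-/

open Finset Filter Topology

section LehmerCode

variable {N : ℕ}

def lehmerCode (π : Equiv.Perm (Fin N)) (i : Fin N) : ℕ :=
  #{k | k < i ∧ π i < π k}

lemma lehmerCode_le (π : Equiv.Perm (Fin N)) (i : Fin N) : lehmerCode π i ≤ i :=
  (card_le_card fun _ hk => mem_Iio.2 (mem_filter.1 hk).2.1).trans_eq (Fin.card_Iio i)

lemma invCount_eq_sum_lehmerCode (π : Equiv.Perm (Fin N)) :
    invCount π = ∑ i, lehmerCode π i := by
  simp only [invCount, lehmerCode, card_filter, Fintype.sum_prod_type_right]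

lemma isLRMax_iff_lehmerCode_eq_zero (π : Equiv.Perm (Fin N)) (i : Fin N) :
    IsLRMax π i ↔ lehmerCode π i = 0 := by
  simp only [IsLRMax, lehmerCode, card_eq_zero, filter_eq_empty_iff, mem_univ, true_implies,
    not_and, not_lt]
  exact forall_congr' fun k => imp_congr_right fun hk => (π.injective.ne hk.ne).le_iff_lt.symm

lemma lehmerCode_eq_card_filter (π : Equiv.Perm (Fin N)) (i : Fin N) :
    lehmerCode π i = #{v ∈ ({v | π.symm v ≤ i} : Finset (Fin N)) | π i < v} := by
  refine card_equiv π fun k => ?_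
  simp only [mem_filter, mem_univ, true_and, Equiv.symm_apply_apply]
  exact and_congr_left fun hlt => lt_iff_le_and_ne.trans
    (and_iff_left fun h => hlt.ne (congrArg π h).symm)

lemma card_filter_lt_lt_of_lt {α : Type*} [LinearOrder α] {S : Finset α} {x y : α}
    (hxy : x < y) (hy : y ∈ S) : #{v ∈ S | y < v} < #{v ∈ S | x < v} :=
  card_lt_card <| (ssubset_iff_of_subset (monotone_filter_right S fun _ _ => hxy.trans)).2
    ⟨y, mem_filter.2 ⟨hy, hxy⟩, fun h => (mem_filter.1 h).2.false⟩

lemma eq_of_card_filter_lt_eq {α : Type*} [LinearOrder α] {S : Finset α} {x y : α}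
    (hx : x ∈ S) (hy : y ∈ S) (h : #{v ∈ S | x < v} = #{v ∈ S | y < v}) : x = y := by
  rcases lt_trichotomy x y with hxy | rfl | hxy
  · exact absurd h (card_filter_lt_lt_of_lt hxy hy).ne'
  · rfl
  · exact absurd h (card_filter_lt_lt_of_lt hxy hx).ne

lemma symm_le_iff_of_eqOn_Ioi {π σ : Equiv.Perm (Fin N)} {i : Fin N}
    (h : ∀ k, i < k → π k = σ k) (v : Fin N) : π.symm v ≤ i ↔ σ.symm v ≤ i := by
  have hsymm : ∀ {π σ : Equiv.Perm (Fin N)}, (∀ k, i < k → π k = σ k) →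
      i < π.symm v → σ.symm v = π.symm v := fun h hv => by
    rw [Equiv.symm_apply_eq, ← h _ hv, Equiv.apply_symm_apply]
  refine not_iff_not.1 ⟨fun hv => ?_, fun hv => ?_⟩ <;> rw [not_le] at hv ⊢
  · rwa [hsymm h hv]
  · rwa [hsymm (fun k hk => (h k hk).symm) hv]

/-- A permutation is recovered from its code by downward induction: the values at positions
`≤ i` are known from the positions above `i`, and among them `π i` is the one exceeded by
exactly `lehmerCode π i` others. -/
lemma lehmerCode_injective : Function.Injective (lehmerCode (N := N)) := by
  intro π σ h
  ext1 i
  induction i using WellFoundedGT.induction with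
  | _ i ih =>
    have hS : ({v | π.symm v ≤ i} : Finset (Fin N)) = ({v | σ.symm v ≤ i} : Finset (Fin N)) :=
      filter_congr fun v _ => symm_le_iff_of_eqOn_Ioi ih v
    refine eq_of_card_filter_lt_eq (S := {v | π.symm v ≤ i}) (by simp) (by simp [hS]) ?_
    rw [← lehmerCode_eq_card_filter, hS, ← lehmerCode_eq_card_filter, h]

noncomputable def lehmerCodeEquiv : Equiv.Perm (Fin N) ≃ ((i : Fin N) → Fin (i + 1)) :=
  Equiv.ofBijective (fun π i => ⟨lehmerCode π i, Nat.lt_succ_of_le (lehmerCode_le π i)⟩) <|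
    (Fintype.bijective_iff_injective_and_card _).2
      ⟨fun π σ h => lehmerCode_injective <| funext fun i => congrArg Fin.val (congrFun h i), by
        simp [Fintype.card_perm, Fintype.card_pi, Fin.prod_univ_eq_prod_range (· + 1),
          prod_range_add_one_eq_factorial]⟩

lemma lehmerCodeEquiv_apply_eq_zero_iff (π : Equiv.Perm (Fin N)) (i : Fin N) :
    lehmerCodeEquiv π i = 0 ↔ lehmerCode π i = 0 :=
  Fin.ext_iff

end LehmerCode

/-- The global maximum is the last left-to-right maximum, so the strategy wins exactly when it
meets only one left-to-right maximum after the first `k` candidates. -/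
lemma kWinnable_iff_existsUnique {N k : ℕ} (π : Equiv.Perm (Fin N)) :
    KWinnable k π ↔ ∃! p : Fin N, k ≤ (p : ℕ) ∧ IsLRMax π p := by
  constructor
  · rintro ⟨j, hkj, hj, hmax, hfirst⟩
    refine ⟨j, ⟨hkj, hj⟩, fun i ⟨hki, hi⟩ => ?_⟩
    rcases lt_trichotomy i j with hij | rfl | hji
    · exact absurd hi (hfirst i hki hij)
    · rfl
    · exact absurd (hi j hji) (hmax i).not_gt
  · rintro ⟨p, ⟨hkp, hp⟩, huniq⟩
    obtain ⟨M, -, hM⟩ := exists_max_image univ π ⟨p, mem_univ p⟩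
    have hMmax : IsLRMax π M := fun i hi =>
      (hM i (mem_univ i)).lt_of_ne (π.injective.ne hi.ne)
    have hkM : k ≤ (M : ℕ) := by
      by_contra! hMk
      exact (hp M (Fin.lt_def.2 (hMk.trans_le hkp))).not_ge (hM p (mem_univ p))
    obtain rfl := huniq M ⟨hkM, hMmax⟩
    exact ⟨M, hkM, hMmax, fun i => hM i (mem_univ i),
      fun i hki hiM hi => hiM.ne (huniq i ⟨hki, hi⟩)⟩

open Classical in
lemma WM_eq_sum_lehmerCodes (N k : ℕ) (θ : ℝ) :
    WM N k θ = ∑ c ∈ univ.filter (fun c : (i : Fin N) → Fin (i + 1) =>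
      ∃! p : Fin N, k ≤ (p : ℕ) ∧ c p = 0), ∏ i, θ ^ (c i : ℕ) := by
  refine sum_equiv lehmerCodeEquiv (fun π => ?_) (fun π _ => ?_)
  · simp only [mem_filter, mem_univ, true_and, kWinnable_iff_existsUnique,
      isLRMax_iff_lehmerCode_eq_zero, lehmerCodeEquiv_apply_eq_zero_iff]
  · rw [invCount_eq_sum_lehmerCode, ← prod_pow_eq_pow_sum]
    rfl

section CodeSum

variable {N : ℕ} (k : ℕ)

/-- The values allowed at position `i` of a code whose only zero at a position `≥ k` is at `p`. -/
def codeSlot (p i : Fin N) : Finset (Fin (i + 1)) :=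
  if i = p then {0} else if k ≤ (i : ℕ) then univ.erase 0 else univ

lemma mem_piFinset_codeSlot {p : Fin N} {c : (i : Fin N) → Fin (i + 1)} :
    c ∈ Fintype.piFinset (codeSlot k p) ↔
      c p = 0 ∧ ∀ i : Fin N, k ≤ (i : ℕ) → i ≠ p → c i ≠ 0 := by
  have slot : ∀ i, c i ∈ codeSlot k p i ↔
      (i = p → c i = 0) ∧ (k ≤ (i : ℕ) → i ≠ p → c i ≠ 0) := by
    intro i
    unfold codeSlot
    split_ifs <;> simp_all
  simp only [Fintype.mem_piFinset, slot, forall_and, forall_eq]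

open Classical in
lemma filter_existsUnique_eq_biUnion :
    univ.filter (fun c : (i : Fin N) → Fin (i + 1) => ∃! p : Fin N, k ≤ (p : ℕ) ∧ c p = 0) =
      (univ.filter (fun p : Fin N => k ≤ (p : ℕ))).biUnion
        (fun p => Fintype.piFinset (codeSlot k p)) := by
  ext c
  simp only [mem_filter, mem_univ, true_and, mem_biUnion, mem_piFinset_codeSlot]
  refine exists_congr fun p => ⟨fun ⟨⟨hkp, hp⟩, huniq⟩ => ?_, fun ⟨hkp, hp, hne⟩ => ?_⟩
  · exact ⟨hkp, hp, fun i hki hip hi => hip (huniq i ⟨hki, hi⟩)⟩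
  · exact ⟨⟨hkp, hp⟩, fun i ⟨hki, hi⟩ => by_contra fun hip => hne i hki hip hi⟩

lemma pairwiseDisjoint_piFinset_codeSlot :
    (univ.filter (fun p : Fin N => k ≤ (p : ℕ)) : Set (Fin N)).PairwiseDisjoint
      (fun p => Fintype.piFinset (codeSlot k p)) := by
  intro p hp q _ hpq
  refine disjoint_left.2 fun c hcp hcq => ?_
  exact (mem_piFinset_codeSlot k).1 hcq |>.2 p (by simpa using hp) hpq
    ((mem_piFinset_codeSlot k).1 hcp).1

end CodeSum

section Weights

variable (θ : ℝ)

lemma sum_univ_fin_pow (n : ℕ) : ∑ x : Fin n, θ ^ (x : ℕ) = tA n θ :=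
  Fin.sum_univ_eq_sum_range (θ ^ ·) n

lemma sum_erase_zero_fin_pow (n : ℕ) :
    ∑ x ∈ univ.erase (0 : Fin (n + 1)), θ ^ (x : ℕ) = θ * tA n θ := by
  have h := add_sum_erase univ (fun x : Fin (n + 1) => θ ^ (x : ℕ)) (mem_univ 0)
  rw [sum_univ_fin_pow, tA, geom_sum_succ] at h
  simp only [Fin.val_zero, pow_zero] at h
  rw [tA]
  linarith

lemma sum_codeSlot_pow {N : ℕ} (k : ℕ) (p i : Fin N) :
    ∑ x ∈ codeSlot k p i, θ ^ (x : ℕ) =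
      if (i : ℕ) = p then 1 else if k ≤ (i : ℕ) then θ * tA i θ else tA (i + 1) θ := by
  simp only [codeSlot, Fin.val_inj]
  split_ifs
  · simp
  · exact sum_erase_zero_fin_pow θ i
  · exact sum_univ_fin_pow θ (i + 1)

lemma prod_range_ite {N k p : ℕ} (hkp : k ≤ p) (hpN : p < N) (a b : ℕ → ℝ) :
    ∏ m ∈ range N, (if m = p then 1 else if k ≤ m then a m else b m) =
      (∏ m ∈ range k, b m) * ∏ m ∈ (Ico k N).erase p, a m := by
  rw [← prod_range_mul_prod_Ico _ (hkp.trans hpN.le),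
    ← mul_prod_erase (Ico k N) _ (mem_Ico.2 ⟨hkp, hpN⟩), if_pos rfl, one_mul]
  congr 1
  · exact prod_congr rfl fun m hm => by
      rw [if_neg (by simp at hm; omega), if_neg (by simp at hm; omega)]
  · exact prod_congr rfl fun m hm => by
      rw [mem_erase, mem_Ico] at hm
      rw [if_neg hm.1, if_pos hm.2.1]

lemma sum_filter_fin_le {N k : ℕ} (F : ℕ → ℝ) :
    ∑ p ∈ univ.filter (fun p : Fin N => k ≤ (p : ℕ)), F p = ∑ m ∈ Ico k N, F m := by
  rw [sum_filter, Fin.sum_univ_eq_sum_range (fun m => if k ≤ m then F m else 0), ← sum_filter]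
  congr 1
  ext m
  simp only [mem_filter, mem_range, mem_Ico]
  omega

lemma WM_eq (N k : ℕ) :
    WM N k θ = qfact k θ * ∑ p ∈ Ico k N, ∏ i ∈ (Ico k N).erase p, θ * tA i θ := by
  rw [WM_eq_sum_lehmerCodes, filter_existsUnique_eq_biUnion,
    sum_biUnion (pairwiseDisjoint_piFinset_codeSlot k), mul_sum, ← sum_filter_fin_le]
  refine sum_congr rfl fun p hp => ?_
  rw [← prod_univ_sum (codeSlot k p) fun _ x => θ ^ (x : ℕ)]
  simp only [sum_codeSlot_pow]
  rw [Fin.prod_univ_eq_prod_range (fun m => if m = (p : ℕ) then 1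
      else if k ≤ m then θ * tA m θ else tA (m + 1) θ),
    prod_range_ite (mem_filter.1 hp).2 p.isLt, qfact]

end Weights

section Limit

variable {θ : ℝ}

lemma tA_pos (h0 : 0 ≤ θ) {n : ℕ} (hn : 0 < n) : 0 < tA n θ :=
  sum_pos' (fun m _ => pow_nonneg h0 m) ⟨0, mem_range.2 hn, by simp⟩

lemma qfact_pos (h0 : 0 ≤ θ) (n : ℕ) : 0 < qfact n θ :=
  prod_pos fun m _ => tA_pos h0 m.succ_pos

lemma WM_div_qfact (h0 : 0 < θ) {k : ℕ} (hk : 0 < k) (j : ℕ) :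
    WM (k + j) k θ / qfact (k + j) θ =
      ∑ t ∈ range j, (θ * tA (k + t) θ)⁻¹ * ∏ s ∈ range j, θ * tA (k + s) θ / tA (k + s + 1) θ := by
  have hq : qfact (k + j) θ = qfact k θ * ∏ i ∈ Ico k (k + j), tA (i + 1) θ :=
    (prod_range_mul_prod_Ico _ (Nat.le_add_right k j)).symm
  rw [WM_eq, hq, mul_div_mul_left _ _ (qfact_pos h0.le k).ne', sum_div, sum_Ico_eq_sum_range,
    add_tsub_cancel_left]
  refine sum_congr rfl fun t ht => ?_
  have hp : k + t ∈ Ico k (k + j) := mem_Ico.2 ⟨Nat.le_add_right k t, by simpa using ht⟩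
  have ha : θ * tA (k + t) θ ≠ 0 := (mul_pos h0 (tA_pos h0.le (by omega))).ne'
  rw [(eq_inv_mul_iff_mul_eq₀ ha).2 (mul_prod_erase _ (fun i => θ * tA i θ) hp), mul_div_assoc,
    ← prod_div_distrib, prod_Ico_eq_prod_range, add_tsub_cancel_left]

lemma tendsto_tA (h0 : 0 ≤ θ) (h1 : θ < 1) :
    Tendsto (fun n => tA n θ) atTop (𝓝 (1 - θ)⁻¹) :=
  (hasSum_geometric_of_lt_one h0 h1).tendsto_sum_nat

lemma tendsto_WM_div_qfact (h0 : 0 < θ) (h1 : θ < 1) (j : ℕ) :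
    Tendsto (fun k => WM (k + j) k θ / qfact (k + j) θ) atTop
      (𝓝 ((j : ℝ) * θ ^ (j - 1) * (1 - θ))) := by
  have hc : (1 - θ)⁻¹ ≠ 0 := inv_ne_zero (sub_ne_zero.2 h1.ne')
  have hshift : ∀ t, Tendsto (fun k => tA (k + t) θ) atTop (𝓝 (1 - θ)⁻¹) :=
    fun t => (tendsto_tA h0.le h1).comp (tendsto_add_atTop_nat t)
  have hterm : ∀ t, Tendsto
      (fun k => (θ * tA (k + t) θ)⁻¹ * ∏ s ∈ range j, θ * tA (k + s) θ / tA (k + s + 1) θ) atTop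
      (𝓝 ((θ * (1 - θ)⁻¹)⁻¹ * ∏ s ∈ range j, θ * (1 - θ)⁻¹ / (1 - θ)⁻¹)) := fun t =>
    ((tendsto_const_nhds.mul (hshift t)).inv₀ (mul_ne_zero h0.ne' hc)).mul <|
      tendsto_finsetProd _ fun s _ => (tendsto_const_nhds.mul (hshift s)).div (hshift (s + 1)) hc
  have hvalue : (j : ℝ) * θ ^ (j - 1) * (1 - θ) =
      ∑ t ∈ range j, (θ * (1 - θ)⁻¹)⁻¹ * ∏ s ∈ range j, θ * (1 - θ)⁻¹ / (1 - θ)⁻¹ := by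
    rw [sum_const, card_range, nsmul_eq_mul, prod_const, card_range, mul_div_cancel_right₀ _ hc]
    rcases j with _ | j
    · simp
    · field_simp
      simp only [Nat.add_sub_cancel, pow_succ]
      field_simp
  rw [hvalue]
  refine (tendsto_finsetSum _ fun t _ => hterm t).congr' ?_
  filter_upwards [eventually_gt_atTop 0] with k hk
  exact (WM_div_qfact h0 hk j).symm

end Limit

theorem mallows_right_justified_limit_general (θ : ℝ) (h0 : 0 < θ) (h1 : θ < 1)
    (j : ℕ) :
    Filter.Tendsto (fun N => WM N (N - j) θ / qfact N θ) Filter.atTop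
      (nhds ((j : ℝ) * θ ^ (j - 1) * (1 - θ))) := by
  refine ((tendsto_WM_div_qfact h0 h1 j).comp (tendsto_sub_atTop_nat j)).congr' ?_
  filter_upwards [eventually_ge_atTop j] with N hN
  simp only [Function.comp_apply, Nat.sub_add_cancel hN]

/-- in the Mallows model with fixed `0 < θ < 1` and fixed `j ≥ 1`,
rejecting all but the last `j` candidates has limiting success probability
`lim_{N→∞} W(N, N−j)/[N]_θ! = j·θ^{j−1}·(1−θ)`. -/
theorem mallows_right_justified_limit (θ : ℝ) (h0 : 0 < θ) (h1 : θ < 1)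
    (j : ℕ) (hj : 1 ≤ j) :
    Filter.Tendsto (fun N => WM N (N - j) θ / qfact N θ) Filter.atTop
      (nhds ((j : ℝ) * θ ^ (j - 1) * (1 - θ))) :=
  mallows_right_justified_limit_general θ h0 h1 j
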